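/- arXiv:1909.12342 — 2 statements merged into one kernel-verified Lean document; each statement's English description precedes it below -/
import Mathlib

section
/- Under the hypotheses of the preceding optimality result, assume additionally that the certificate satisfies the strict inequality |g(w)| < 1 for every w ∉ W, and that the Gram matrix G ∈ ℝ^{|W|×|W|} with entries G_{jk} = (1/m)·∑_{i=1}^m ∫_ℝ L_{θᵢ}[D](t − ⟨u_{θᵢ}^⊥, w_j⟩)·L_{θᵢ}[D](t − ⟨u_{θᵢ}^⊥, w_k⟩) dt (for w_j, w_k ∈ W) is positive definite. Then X₀ is the unique optimal solution among finitely-atomic feasible measures: every finitely-atomic signed measure X′ = ∑_{w′∈W′} α′_{w′} δ_{w′} (W′ finite, α′_{w′} ≠ 0) satisfying L_{θᵢ}[D∗X′] = L_{θᵢ}[D∗X₀] for all i and attaining |X′|(ℝ²) = |X₀|(ℝ²) must equal X₀; in particular its support W′ is contained in W. -/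
noncomputable section
open MeasureTheory

/-- Probe direction `u_θ = (cos θ, sin θ)`. -/
def uvec (θ : ℝ) : ℝ × ℝ := (Real.cos θ, Real.sin θ)

/-- Sweep direction `u_θ^⊥ = (sin θ, -cos θ)`. -/
def uperp (θ : ℝ) : ℝ × ℝ := (Real.sin θ, -Real.cos θ)

/-- Euclidean inner product on ℝ². -/
def dot2 (a b : ℝ × ℝ) : ℝ := a.1 * b.1 + a.2 * b.2

/-- Euclidean norm on ℝ². -/
def norm2 (a : ℝ × ℝ) : ℝ := Real.sqrt (a.1 ^ 2 + a.2 ^ 2)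

/-- Line projection at angle θ: `L_θ[Y](t) = ∫ Y(s·u_θ + t·u_θ^⊥) ds`. -/
def lineProj (Y : ℝ × ℝ → ℝ) (θ t : ℝ) : ℝ := ∫ s : ℝ, Y (s • uvec θ + t • uperp θ)
/-- Signed Dirac measure at `w`. -/
def diracS (w : ℝ × ℝ) : SignedMeasure (ℝ × ℝ) := (Measure.dirac w).toSignedMeasure

/-- Integral of a function against a finite signed measure (via Jordan decomposition);
used to define the convolution `(D ∗ X)(y) = ∫ D(y - w) dX(w)`. -/
def sInt (X : SignedMeasure (ℝ × ℝ)) (f : ℝ × ℝ → ℝ) : ℝ :=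
  (∫ w, f w ∂X.toJordanDecomposition.posPart) - ∫ w, f w ∂X.toJordanDecomposition.negPart

/-! ### Auxiliary lemmas -/

lemma key_decomp (θ s t : ℝ) (w : ℝ × ℝ) :
    s • uvec θ + t • uperp θ - w
      = (s - dot2 (uvec θ) w) • uvec θ + (t - dot2 (uperp θ) w) • uperp θ := by
  have h := Real.sin_sq_add_cos_sq θ
  apply Prod.ext <;>
    simp [uvec, uperp, dot2, Prod.smul_def, Prod.fst, Prod.snd] 
  · linear_combination w.1*h
  · linear_combination w.2*h

lemma dot2_add (a x y : ℝ × ℝ) : dot2 a (x + y) = dot2 a x + dot2 a y := by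
  simp [dot2]; ring

lemma dot2_smul (a : ℝ × ℝ) (s : ℝ) (x : ℝ × ℝ) : dot2 a (s • x) = s * dot2 a x := by
  simp [dot2]; ring

lemma dot2_uu (θ : ℝ) : dot2 (uvec θ) (uvec θ) = 1 := by
  simp [dot2, uvec]; nlinarith [Real.sin_sq_add_cos_sq θ]

lemma dot2_pp (θ : ℝ) : dot2 (uperp θ) (uperp θ) = 1 := by
  simp [dot2, uperp]; nlinarith [Real.sin_sq_add_cos_sq θ]

lemma dot2_up (θ : ℝ) : dot2 (uvec θ) (uperp θ) = 0 := by
  simp [dot2, uvec, uperp]; ring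

lemma dot2_pu (θ : ℝ) : dot2 (uperp θ) (uvec θ) = 0 := by
  simp [dot2, uvec, uperp]; ring

lemma cont_dot2 (a : ℝ × ℝ) : Continuous (dot2 a) := by
  unfold dot2; fun_prop

section slice
variable {D : ℝ × ℝ → ℝ}

lemma cont_slice (hD_cont : Continuous D) (θ : ℝ) (c : ℝ × ℝ) :
    Continuous fun s : ℝ => D (s • uvec θ + c) :=
  hD_cont.comp (by fun_prop)

lemma supp_slice (hD_supp : HasCompactSupport D) (θ : ℝ) (c : ℝ × ℝ) :
    HasCompactSupport fun s : ℝ => D (s • uvec θ + c) := by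
  apply HasCompactSupport.intro
    (hD_supp.image ((cont_dot2 (uvec θ)).sub continuous_const : Continuous
      fun x : ℝ × ℝ => dot2 (uvec θ) x - dot2 (uvec θ) c))
  intro s hs
  by_contra hD
  apply hs
  refine ⟨s • uvec θ + c, subset_tsupport _ hD, ?_⟩
  simp [dot2_add, dot2_smul, dot2_uu]

lemma integrable_slice (hD_cont : Continuous D) (hD_supp : HasCompactSupport D) (θ : ℝ) (c : ℝ × ℝ) :
    Integrable fun s : ℝ => D (s • uvec θ + c) :=
  (cont_slice hD_cont θ c).integrable_of_hasCompactSupport (supp_slice hD_supp θ c)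

lemma lineProj_shift (θ t : ℝ) (w : ℝ × ℝ) :
    (∫ s : ℝ, D (s • uvec θ + t • uperp θ - w))
      = lineProj D θ (t - dot2 (uperp θ) w) := by
  have h1 : ∀ s : ℝ, s • uvec θ + t • uperp θ - w
      = (s - dot2 (uvec θ) w) • uvec θ + (t - dot2 (uperp θ) w) • uperp θ :=
    fun s => key_decomp θ s t w
  simp only [h1, lineProj]
  exact integral_sub_right_eq_self (fun s : ℝ => D (s • uvec θ + (t - dot2 (uperp θ) w) • uperp θ)) (dot2 (uvec θ) w)

lemma lineProj_atomic (hD_cont : Continuous D) (hD_supp : HasCompactSupport D)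
    (W : Finset (ℝ × ℝ)) (α : ℝ × ℝ → ℝ) (θ t : ℝ) :
    lineProj (fun y => ∑ w ∈ W, α w * D (y - w)) θ t
      = ∑ w ∈ W, α w * lineProj D θ (t - dot2 (uperp θ) w) := by
  have hint : ∀ w ∈ W, Integrable (fun s : ℝ => α w * D (s • uvec θ + t • uperp θ - w)) := by
    intro w _
    have : ∀ s : ℝ, s • uvec θ + t • uperp θ - w = s • uvec θ + (t • uperp θ - w) := by
      intro s; abel
    simp only [this]
    exact (integrable_slice hD_cont hD_supp θ (t • uperp θ - w)).const_mul _
  calc lineProj (fun y => ∑ w ∈ W, α w * D (y - w)) θ t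
      = ∑ w ∈ W, ∫ s : ℝ, α w * D (s • uvec θ + t • uperp θ - w) := by
        unfold lineProj; exact integral_finset_sum W hint
    _ = ∑ w ∈ W, α w * lineProj D θ (t - dot2 (uperp θ) w) := by
        refine Finset.sum_congr rfl fun w _ => ?_
        rw [integral_const_mul, lineProj_shift]

lemma abs_dot2_le (u : ℝ × ℝ) (hu1 : |u.1| ≤ 1) (hu2 : |u.2| ≤ 1) (x : ℝ × ℝ) :
    |dot2 u x| ≤ 2 * ‖x‖ := by
  have h1 : |x.1| ≤ ‖x‖ := by simpa [Real.norm_eq_abs] using norm_fst_le x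
  have h2 : |x.2| ≤ ‖x‖ := by simpa [Real.norm_eq_abs] using norm_snd_le x
  calc |dot2 u x| ≤ |u.1 * x.1| + |u.2 * x.2| := abs_add_le _ _
    _ = |u.1| * |x.1| + |u.2| * |x.2| := by rw [abs_mul, abs_mul]
    _ ≤ 2 * ‖x‖ := by nlinarith [abs_nonneg x.1, abs_nonneg x.2, abs_nonneg u.1, abs_nonneg u.2]

lemma abs_dot2_uvec_le (θ : ℝ) (x : ℝ × ℝ) : |dot2 (uvec θ) x| ≤ 2 * ‖x‖ :=
  abs_dot2_le _ (by simp [uvec, Real.abs_cos_le_one]) (by simp [uvec, Real.abs_sin_le_one]) x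

lemma abs_dot2_uperp_le (θ : ℝ) (x : ℝ × ℝ) : |dot2 (uperp θ) x| ≤ 2 * ‖x‖ :=
  abs_dot2_le _ (by simp [uperp, Real.abs_sin_le_one]) (by simp [uperp, abs_neg, Real.abs_cos_le_one]) x

lemma cont_lineProj (hD_cont : Continuous D) (hD_supp : HasCompactSupport D) (θ : ℝ) :
    Continuous fun t => lineProj D θ t := by
  obtain ⟨C, hC⟩ := hD_cont.bounded_above_of_compact_support hD_supp
  obtain ⟨R, hR⟩ := hD_supp.isBounded.subset_closedBall 0
  have hbd : Integrable ((Set.Icc (-(2*R)) (2*R)).indicator fun _ => C) := by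
    rw [integrable_indicator_iff measurableSet_Icc]
    exact integrableOn_const measure_Icc_lt_top.ne
  refine continuous_of_dominated
    (fun t => ((cont_slice hD_cont θ (t • uperp θ))).aestronglyMeasurable)
    (fun t => Filter.Eventually.of_forall fun s => ?_) hbd
    (Filter.Eventually.of_forall fun s => hD_cont.comp (by fun_prop))
  by_cases hs : s ∈ Set.Icc (-(2*R)) (2*R)
  · rw [Set.indicator_of_mem hs]; exact hC _
  · rw [Set.indicator_of_notMem hs, Real.norm_eq_abs]
    refine le_of_eq (abs_eq_zero.mpr ?_)
    by_contra hD
    apply hs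
    set x := s • uvec θ + t • uperp θ with hx
    have hxx : ‖x‖ ≤ R := by
      simpa [Metric.mem_closedBall, dist_eq_norm] using hR (subset_tsupport _ hD)
    have hs' : dot2 (uvec θ) x = s := by
      simp [hx, dot2_add, dot2_smul, dot2_uu, dot2_up]
    have := abs_dot2_uvec_le θ x
    rw [hs'] at this
    have : |s| ≤ 2 * R := by nlinarith
    exact Set.mem_Icc.mpr (abs_le.mp this)

lemma supp_lineProj (hD_supp : HasCompactSupport D) (θ : ℝ) :
    HasCompactSupport fun t => lineProj D θ t := by
  apply HasCompactSupport.intro (hD_supp.image (cont_dot2 (uperp θ)))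
  intro t ht
  have : ∀ s : ℝ, D (s • uvec θ + t • uperp θ) = 0 := by
    intro s
    by_contra hD
    exact ht ⟨s • uvec θ + t • uperp θ, subset_tsupport _ hD, by
      simp [dot2_add, dot2_smul, dot2_pp, dot2_pu]⟩
  simp [lineProj, this]

lemma integrable_lineProj_mul (hD_cont : Continuous D) (hD_supp : HasCompactSupport D)
    (θ : ℝ) (a b : ℝ) :
    Integrable fun t : ℝ => lineProj D θ (t - a) * lineProj D θ (t - b) := by
  have hc : Continuous fun t : ℝ => lineProj D θ (t - a) * lineProj D θ (t - b) :=
    ((cont_lineProj hD_cont hD_supp θ).comp (by fun_prop)).mul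
      ((cont_lineProj hD_cont hD_supp θ).comp (by fun_prop))
  apply hc.integrable_of_hasCompactSupport
  have h1 : HasCompactSupport fun t : ℝ => lineProj D θ (t - a) :=
    (supp_lineProj hD_supp θ).comp_homeomorph (Homeomorph.subRight a)
  exact h1.mul_right

end slice

section atoms
open scoped ENNReal Classical

lemma integrable_dirac_any {f : ℝ × ℝ → ℝ} (a : ℝ × ℝ) : Integrable f (Measure.dirac a) := by
  have hae : f =ᵐ[Measure.dirac a] fun _ => f a := by
    rw [Filter.EventuallyEq, ae_iff]
    have : {x : ℝ × ℝ | ¬ f x = f a} ⊆ {a}ᶜ := by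
      intro x hx
      simp only [Set.mem_compl_iff, Set.mem_singleton_iff]
      rintro rfl; exact hx rfl
    refine measure_mono_null this ?_
    simp [Measure.dirac_apply]
  exact (integrable_const (f a)).congr hae.symm

variable (W : Finset (ℝ × ℝ)) (α : ℝ × ℝ → ℝ)

def posm : Measure (ℝ × ℝ) :=
  ∑ w ∈ W.filter (fun w => 0 < α w), ENNReal.ofReal (α w) • Measure.dirac w

def negm : Measure (ℝ × ℝ) :=
  ∑ w ∈ W.filter (fun w => α w < 0), ENNReal.ofReal (-α w) • Measure.dirac w

instance posm_fin : IsFiniteMeasure (posm W α) := by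
  constructor
  rw [posm, Measure.finset_sum_apply]
  refine (ENNReal.sum_lt_top).mpr fun w _ => ?_
  simp [Measure.smul_apply, ENNReal.mul_lt_top, ENNReal.ofReal_lt_top]

instance negm_fin : IsFiniteMeasure (negm W α) := by
  constructor
  rw [negm, Measure.finset_sum_apply]
  refine (ENNReal.sum_lt_top).mpr fun w _ => ?_
  simp [Measure.smul_apply, ENNReal.mul_lt_top, ENNReal.ofReal_lt_top]

lemma posm_negm_msing : posm W α ⟂ₘ negm W α := by
  refine ⟨(W.filter (fun w => α w < 0) : Finset (ℝ × ℝ)), (Set.Finite.measurableSet (Finset.finite_toSet _)), ?_, ?_⟩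
  · rw [posm, Measure.finset_sum_apply]
    refine Finset.sum_eq_zero fun w hw => ?_
    rw [Finset.mem_filter] at hw
    rw [Measure.smul_apply, Measure.dirac_apply]
    have hnot : w ∉ (↑(W.filter (fun w => α w < 0)) : Set (ℝ × ℝ)) := by
      simp only [Finset.coe_filter, Set.mem_setOf_eq, not_and]
      exact fun _ => not_lt.mpr (le_of_lt hw.2)
    rw [Set.indicator_of_notMem hnot, smul_eq_mul, mul_zero]
  · rw [negm, Measure.finset_sum_apply]
    refine Finset.sum_eq_zero fun w hw => ?_
    rw [Finset.mem_filter] at hw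
    rw [Measure.smul_apply, Measure.dirac_apply]
    have hnot : w ∉ (↑(W.filter (fun w => α w < 0)) : Set (ℝ × ℝ))ᶜ := by
      simp [hw.1, hw.2]
    rw [Set.indicator_of_notMem hnot, smul_eq_mul, mul_zero]

def jdAtom : JordanDecomposition (ℝ × ℝ) :=
  ⟨posm W α, negm W α, posm_negm_msing W α⟩

lemma vm_sum_apply {ι : Type*} (s : Finset ι) (v : ι → SignedMeasure (ℝ × ℝ)) (A : Set (ℝ × ℝ)) :
    (∑ i ∈ s, v i) A = ∑ i ∈ s, v i A := by
  induction s using Finset.cons_induction with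
  | empty => simp
  | cons a s ha ih => rw [Finset.sum_cons, VectorMeasure.add_apply, ih, Finset.sum_cons]

variable (hα : ∀ w ∈ W, α w ≠ 0)

lemma posm_apply_toReal {A : Set (ℝ × ℝ)} :
    ((posm W α) A).toReal
      = ∑ w ∈ W.filter (fun w => 0 < α w), α w * (if w ∈ A then (1:ℝ) else 0) := by
  rw [posm, Measure.finset_sum_apply, ENNReal.toReal_sum]
  · refine Finset.sum_congr rfl fun w hw => ?_
    rw [Finset.mem_filter] at hw
    rw [Measure.smul_apply, Measure.dirac_apply, smul_eq_mul, ENNReal.toReal_mul,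
      ENNReal.toReal_ofReal (le_of_lt hw.2), Set.indicator_apply]
    split <;> simp
  · intro w _
    rw [Measure.smul_apply, Measure.dirac_apply, smul_eq_mul, Set.indicator_apply]
    refine ENNReal.mul_ne_top ENNReal.ofReal_ne_top ?_
    split <;> simp

lemma negm_apply_toReal {A : Set (ℝ × ℝ)} :
    ((negm W α) A).toReal
      = ∑ w ∈ W.filter (fun w => α w < 0), (-α w) * (if w ∈ A then (1:ℝ) else 0) := by
  rw [negm, Measure.finset_sum_apply, ENNReal.toReal_sum]
  · refine Finset.sum_congr rfl fun w hw => ?_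
    rw [Finset.mem_filter] at hw
    rw [Measure.smul_apply, Measure.dirac_apply, smul_eq_mul, ENNReal.toReal_mul,
      ENNReal.toReal_ofReal (by linarith [hw.2]), Set.indicator_apply]
    split <;> simp
  · intro w _
    rw [Measure.smul_apply, Measure.dirac_apply, smul_eq_mul, Set.indicator_apply]
    refine ENNReal.mul_ne_top ENNReal.ofReal_ne_top ?_
    split <;> simp

include hα in
lemma jdAtom_toSignedMeasure :
    (jdAtom W α).toSignedMeasure = ∑ w ∈ W, α w • diracS w := by
  ext1 A hA
  rw [vm_sum_apply]
  show (Measure.toSignedMeasure (posm W α) - Measure.toSignedMeasure (negm W α)) A = _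
  rw [Measure.toSignedMeasure_sub_apply hA]
  rw [measureReal_def, measureReal_def, posm_apply_toReal, negm_apply_toReal]
  have hrhs : ∀ w ∈ W, (α w • diracS w) A = α w * (if w ∈ A then (1:ℝ) else 0) := by
    intro w _
    rw [VectorMeasure.smul_apply, diracS, Measure.toSignedMeasure_apply_measurable hA,
      measureReal_def, Measure.dirac_apply, Set.indicator_apply]
    split <;> simp
  rw [Finset.sum_congr rfl hrhs,
    ← Finset.sum_filter_add_sum_filter_not W (fun w => 0 < α w)
      (fun w => α w * (if w ∈ A then (1:ℝ) else 0))]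
  have hfilter : W.filter (fun w => ¬ 0 < α w) = W.filter (fun w => α w < 0) := by
    refine Finset.filter_congr fun w hw => ?_
    have := hα w hw
    constructor
    · intro h; cases lt_or_gt_of_ne this with
      | inl h' => exact h'
      | inr h' => exact absurd h' h
    · intro h; exact not_lt.mpr (le_of_lt h)
  rw [hfilter]
  rw [sub_eq_add_neg, ← Finset.sum_neg_distrib]
  congr 1
  refine Finset.sum_congr rfl fun w _ => by ring

include hα in
lemma filter_not_pos : W.filter (fun w => ¬ 0 < α w) = W.filter (fun w => α w < 0) := by
  refine Finset.filter_congr fun w hw => ?_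
  have := hα w hw
  constructor
  · intro h
    cases lt_or_gt_of_ne this with
    | inl h' => exact h'
    | inr h' => exact absurd h' h
  · intro h; exact not_lt.mpr (le_of_lt h)

include hα in
lemma toJD_atom : (∑ w ∈ W, α w • diracS w).toJordanDecomposition = jdAtom W α :=
  MeasureTheory.JordanDecomposition.toSignedMeasure_injective
    (by rw [SignedMeasure.toSignedMeasure_toJordanDecomposition, jdAtom_toSignedMeasure W α hα])

include hα in
lemma sInt_atom (f : ℝ × ℝ → ℝ) :
    sInt (∑ w ∈ W, α w • diracS w) f = ∑ w ∈ W, α w * f w := by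
  rw [sInt, toJD_atom W α hα]
  show (∫ w, f w ∂posm W α) - (∫ w, f w ∂negm W α) = _
  have hpos : (∫ w, f w ∂posm W α)
      = ∑ w ∈ W.filter (fun w => 0 < α w), α w * f w := by
    rw [posm, integral_finset_sum_measure
      (fun w _ => (integrable_dirac_any w).smul_measure ENNReal.ofReal_ne_top)]
    refine Finset.sum_congr rfl fun w hw => ?_
    rw [Finset.mem_filter] at hw
    rw [integral_smul_measure, integral_dirac, ENNReal.toReal_ofReal (le_of_lt hw.2),
      smul_eq_mul]
  have hneg : (∫ w, f w ∂negm W α)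
      = ∑ w ∈ W.filter (fun w => α w < 0), (-α w) * f w := by
    rw [negm, integral_finset_sum_measure
      (fun w _ => (integrable_dirac_any w).smul_measure ENNReal.ofReal_ne_top)]
    refine Finset.sum_congr rfl fun w hw => ?_
    rw [Finset.mem_filter] at hw
    rw [integral_smul_measure, integral_dirac, ENNReal.toReal_ofReal (by linarith [hw.2]),
      smul_eq_mul]
  rw [hpos, hneg,
    ← Finset.sum_filter_add_sum_filter_not W (fun w => 0 < α w) (fun w => α w * f w),
    filter_not_pos W α hα, sub_eq_add_neg, ← Finset.sum_neg_distrib]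
  congr 1
  refine Finset.sum_congr rfl fun w _ => by ring

include hα in
lemma tv_atom_toReal :
    ((∑ w ∈ W, α w • diracS w).totalVariation Set.univ).toReal = ∑ w ∈ W, |α w| := by
  rw [SignedMeasure.totalVariation, toJD_atom W α hα]
  show (((posm W α) + (negm W α)) Set.univ).toReal = _
  rw [Measure.add_apply, ENNReal.toReal_add (measure_ne_top _ _) (measure_ne_top _ _),
    posm_apply_toReal, negm_apply_toReal]
  simp only [Set.mem_univ, if_true, mul_one]
  rw [← Finset.sum_filter_add_sum_filter_not W (fun w => 0 < α w) (fun w => |α w|),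
    filter_not_pos W α hα]
  congr 1
  · exact Finset.sum_congr rfl fun w hw => (abs_of_pos (Finset.mem_filter.mp hw).2).symm
  · exact Finset.sum_congr rfl fun w hw => (abs_of_neg (Finset.mem_filter.mp hw).2).symm

end atoms

/-- uniqueness of `X₀` among finitely-atomic feasible measures, assuming a
strict dual certificate and a positive definite Gram matrix. -/
theorem tv_min_uniqueness
    (m : ℕ) (hm : 0 < m) (θ : Fin m → ℝ)
    (D : ℝ × ℝ → ℝ) (hD_cont : Continuous D) (hD_supp : HasCompactSupport D)
    (f : ℝ → ℝ) (hD_circ : ∀ w, D w = f (norm2 w))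
    (W : Finset (ℝ × ℝ)) (α : ℝ × ℝ → ℝ) (hα : ∀ w ∈ W, α w ≠ 0)
    (X₀ : SignedMeasure (ℝ × ℝ)) (hX₀ : X₀ = ∑ w ∈ W, α w • diracS w)
    (J : Fin m → ℕ) (tloc : (i : Fin m) → Fin (J i) → ℝ) (q : (i : Fin m) → Fin (J i) → ℝ)
    (g : ℝ × ℝ → ℝ)
    (hg : ∀ w, g w = (1 / Real.sqrt m) *
      ∑ i, ∑ j, q i j * lineProj D (θ i) (tloc i j - dot2 (uperp (θ i)) w))
    (hgW : ∀ w ∈ W, g w = Real.sign (α w))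
    (hg1 : ∀ w, |g w| ≤ 1)
    (hg_strict : ∀ w : ℝ × ℝ, w ∉ W → |g w| < 1)
    (G : Matrix W W ℝ)
    (hG : ∀ wj wk : W, G wj wk = (1 / (m : ℝ)) *
      ∑ i, ∫ t : ℝ, lineProj D (θ i) (t - dot2 (uperp (θ i)) (wj : ℝ × ℝ)) *
        lineProj D (θ i) (t - dot2 (uperp (θ i)) (wk : ℝ × ℝ)))
    (hGpd : G.PosDef) :
    ∀ (W' : Finset (ℝ × ℝ)) (α' : ℝ × ℝ → ℝ) (X' : SignedMeasure (ℝ × ℝ)),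
      (∀ w ∈ W', α' w ≠ 0) →
      X' = ∑ w ∈ W', α' w • diracS w →
      (∀ i t, lineProj (fun y => sInt X' (fun w => D (y - w))) (θ i) t
            = lineProj (fun y => sInt X₀ (fun w => D (y - w))) (θ i) t) →
      X'.totalVariation Set.univ = X₀.totalVariation Set.univ →
      X' = X₀ ∧ (W' : Set (ℝ × ℝ)) ⊆ (W : Set (ℝ × ℝ)) := by
  intro W' α' X' hα' hX' hproj hTV
  have e' : (fun y => sInt X' fun w => D (y - w)) = fun y => ∑ w ∈ W', α' w * D (y - w) := by
    funext y; rw [hX', sInt_atom W' α' hα']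
  have e0 : (fun y => sInt X₀ fun w => D (y - w)) = fun y => ∑ w ∈ W, α w * D (y - w) := by
    funext y; rw [hX₀, sInt_atom W α hα]
  have key : ∀ (i : Fin m) (t : ℝ),
      ∑ w ∈ W', α' w * lineProj D (θ i) (t - dot2 (uperp (θ i)) w)
        = ∑ w ∈ W, α w * lineProj D (θ i) (t - dot2 (uperp (θ i)) w) := by
    intro i t
    have h := hproj i t
    rw [e', e0, lineProj_atomic hD_cont hD_supp, lineProj_atomic hD_cont hD_supp] at h
    exact h
  have hTVr : ∑ w ∈ W', |α' w| = ∑ w ∈ W, |α w| := by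
    have h := congrArg ENNReal.toReal hTV
    rwa [hX', hX₀, tv_atom_toReal W' α' hα', tv_atom_toReal W α hα] at h
  have swap_sum : ∀ (V : Finset (ℝ × ℝ)) (β : ℝ × ℝ → ℝ),
      ∑ w ∈ V, β w * g w
        = (1 / Real.sqrt m) * ∑ i, ∑ j, q i j *
            (∑ w ∈ V, β w * lineProj D (θ i) (tloc i j - dot2 (uperp (θ i)) w)) := by
    intro V β
    simp only [hg, Finset.mul_sum]
    rw [Finset.sum_comm]
    refine Finset.sum_congr rfl fun i _ => ?_
    rw [Finset.sum_comm]
    exact Finset.sum_congr rfl fun j _ => Finset.sum_congr rfl fun w _ => by ring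
  have hsumW' : ∑ w ∈ W', α' w * g w = ∑ w ∈ W, α w * g w := by
    rw [swap_sum W' α', swap_sum W α]
    congr 1
    refine Finset.sum_congr rfl fun i _ => Finset.sum_congr rfl fun j _ => ?_
    rw [key i (tloc i j)]
  have habs : ∀ a : ℝ, a ≠ 0 → a * Real.sign a = |a| := by
    intro a ha
    rcases lt_trichotomy a 0 with h | h | h
    · rw [Real.sign_of_neg h, abs_of_neg h]; ring
    · exact absurd h ha
    · rw [Real.sign_of_pos h, abs_of_pos h]; ring
  have hW0 : ∑ w ∈ W, α w * g w = ∑ w ∈ W, |α w| :=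
    Finset.sum_congr rfl fun w hw => by rw [hgW w hw, habs _ (hα w hw)]
  have hEq : ∑ w ∈ W', α' w * g w = ∑ w ∈ W', |α' w| := by
    rw [hsumW', hW0, ← hTVr]
  have hle : ∀ w ∈ W', α' w * g w ≤ |α' w| := by
    intro w _
    calc α' w * g w ≤ |α' w * g w| := le_abs_self _
      _ = |α' w| * |g w| := abs_mul _ _
      _ ≤ |α' w| * 1 := mul_le_mul_of_nonneg_left (hg1 w) (abs_nonneg _)
      _ = |α' w| := mul_one _
  have hterm : ∀ w ∈ W', α' w * g w = |α' w| :=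
    (Finset.sum_eq_sum_iff_of_le hle).mp hEq
  have hW'W : W' ⊆ W := by
    intro w hw
    by_contra hwW
    have h1 : |g w| < 1 := hg_strict w hwW
    have h3 : |α' w| ≤ |α' w| * |g w| := by
      calc |α' w| = α' w * g w := (hterm w hw).symm
        _ ≤ |α' w * g w| := le_abs_self _
        _ = |α' w| * |g w| := abs_mul _ _
    have h4 : 0 < |α' w| := abs_pos.mpr (hα' w hw)
    nlinarith
  classical
  set β : ℝ × ℝ → ℝ := fun w => (if w ∈ W' then α' w else 0) - α w with hβ
  have hβkey : ∀ (i : Fin m) (t : ℝ),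
      ∑ w ∈ W, β w * lineProj D (θ i) (t - dot2 (uperp (θ i)) w) = 0 := by
    intro i t
    have hext : ∑ w ∈ W, (if w ∈ W' then α' w else 0) *
          lineProj D (θ i) (t - dot2 (uperp (θ i)) w)
        = ∑ w ∈ W', α' w * lineProj D (θ i) (t - dot2 (uperp (θ i)) w) := by
      rw [← Finset.sum_subset hW'W (fun w _ hw => by rw [if_neg hw, zero_mul])]
      exact Finset.sum_congr rfl fun w hw => by rw [if_pos hw]
    simp only [hβ, sub_mul, Finset.sum_sub_distrib]
    rw [hext, key i t, sub_self]
  have hmulvec : G.mulVec (fun k : W => β (k : ℝ × ℝ)) = 0 := by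
    funext j
    show ∑ k : W, G j k * β (k : ℝ × ℝ) = 0
    have hGk : ∀ k : W, G j k * β (k : ℝ × ℝ)
        = (1 / (m : ℝ)) * ∑ i, β (k : ℝ × ℝ) *
            ∫ t : ℝ, lineProj D (θ i) (t - dot2 (uperp (θ i)) (j : ℝ × ℝ)) *
              lineProj D (θ i) (t - dot2 (uperp (θ i)) (k : ℝ × ℝ)) := by
      intro k
      rw [hG j k, Finset.mul_sum, Finset.mul_sum]
      rw [mul_comm]
      rw [Finset.mul_sum]
      exact Finset.sum_congr rfl fun i _ => by ring
    simp only [hGk]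
    rw [← Finset.mul_sum, Finset.sum_comm]
    have hz : ∀ i : Fin m, (∑ k : W, β (k : ℝ × ℝ) *
        ∫ t : ℝ, lineProj D (θ i) (t - dot2 (uperp (θ i)) (j : ℝ × ℝ)) *
          lineProj D (θ i) (t - dot2 (uperp (θ i)) (k : ℝ × ℝ))) = 0 := by
      intro i
      have hrw : ∀ k : W, β (k : ℝ × ℝ) *
          (∫ t : ℝ, lineProj D (θ i) (t - dot2 (uperp (θ i)) (j : ℝ × ℝ)) *
            lineProj D (θ i) (t - dot2 (uperp (θ i)) (k : ℝ × ℝ)))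
          = ∫ t : ℝ, β (k : ℝ × ℝ) *
            (lineProj D (θ i) (t - dot2 (uperp (θ i)) (j : ℝ × ℝ)) *
              lineProj D (θ i) (t - dot2 (uperp (θ i)) (k : ℝ × ℝ))) :=
        fun k => (integral_const_mul _ _).symm
      simp only [hrw]
      rw [← integral_finset_sum _ (fun k _ =>
        (integrable_lineProj_mul hD_cont hD_supp (θ i) _ _).const_mul _)]
      have hzero : ∀ t : ℝ, (∑ k : W, β (k : ℝ × ℝ) *
          (lineProj D (θ i) (t - dot2 (uperp (θ i)) (j : ℝ × ℝ)) *
            lineProj D (θ i) (t - dot2 (uperp (θ i)) (k : ℝ × ℝ)))) = 0 := by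
        intro t
        have : (∑ k : W, β (k : ℝ × ℝ) *
            (lineProj D (θ i) (t - dot2 (uperp (θ i)) (j : ℝ × ℝ)) *
              lineProj D (θ i) (t - dot2 (uperp (θ i)) (k : ℝ × ℝ))))
            = lineProj D (θ i) (t - dot2 (uperp (θ i)) (j : ℝ × ℝ)) *
              ∑ k : W, β (k : ℝ × ℝ) * lineProj D (θ i) (t - dot2 (uperp (θ i)) (k : ℝ × ℝ)) := by
          rw [Finset.mul_sum]
          exact Finset.sum_congr rfl fun k _ => by ring
        rw [this, Finset.sum_coe_sort W
          (fun w => β w * lineProj D (θ i) (t - dot2 (uperp (θ i)) w)), hβkey i t, mul_zero]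
      simp only [hzero, integral_zero]
    simp only [hz, Finset.sum_const_zero, mul_zero]
  have hβ0 : (fun k : W => β (k : ℝ × ℝ)) = 0 := by
    by_contra hx
    have hpd := hGpd.dotProduct_mulVec_pos hx
    rw [hmulvec] at hpd
    simp at hpd
  have hβw : ∀ w ∈ W, (if w ∈ W' then α' w else 0) = α w := by
    intro w hw
    have h := congrFun hβ0 ⟨w, hw⟩
    have : β w = 0 := h
    rw [hβ] at this
    exact sub_eq_zero.mp this
  refine ⟨?_, fun w hw => by exact_mod_cast hW'W (by exact_mod_cast hw)⟩
  rw [hX', hX₀]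
  calc ∑ w ∈ W', α' w • diracS w
      = ∑ w ∈ W, (if w ∈ W' then α' w else 0) • diracS w := by
        rw [← Finset.sum_subset hW'W (fun w _ hw => by rw [if_neg hw, zero_smul])]
        exact (Finset.sum_congr rfl fun w hw => by rw [if_pos hw]).symm
    _ = ∑ w ∈ W, α w • diracS w := Finset.sum_congr rfl fun w hw => by rw [hβw w hw]
end
end

section
/- Let r > 0 and let D_r : ℝ² → ℝ be the normalized two-dimensional Gaussian D_r(w) = (√(2r√π)/(2πr²))·exp(−‖w‖₂²/(2r²)). Let w_i, w_j ∈ ℝ² and set d = ‖w_i − w_j‖₂. Then the average over the scan angle of the correlation of the two line-projected copies of D_r satisfies the two-sided bound: (1 − d²/(8r²))·𝟙{d ≤ 2r} + (r/(2d))·𝟙{d > 2r} ≤ (1/π)·∫₀^π [ ∫_ℝ L_θ[D_r(· − w_i)](t)·L_θ[D_r(· − w_j)](t) dt ] dθ ≤ 1/√(1 + d²/(4r²)). -/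
noncomputable section
open MeasureTheory

/-- Normalized two-dimensional Gaussian of width `r`, whose line projections have unit
`L²(ℝ)` norm. -/
def gauss (r : ℝ) (w : ℝ × ℝ) : ℝ :=
  (Real.sqrt (2 * r * Real.sqrt Real.pi) / (2 * Real.pi * r ^ 2)) *
    Real.exp (-(norm2 w) ^ 2 / (2 * r ^ 2))

/-!
Along `u_θ` the Gaussian `D_r(· - w)` factorises, so its line projection is a one-dimensional
Gaussian of width `r` centred at `⟨w, u_θ^⊥⟩`, and the normalisation of `D_r` makes the `L²`
inner product of two such projections equal to `exp (-⟨w_i - w_j, u_θ^⊥⟩² / 4r²)`. Writing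
`⟨w_i - w_j, u_θ^⊥⟩ = d sin (θ - φ)` and using `π`-periodicity, the angular average becomes
`(1/π) ∫₀^π exp (-c sin² θ) dθ` with `c = d² / 4r²`. The upper bound follows from
`exp (-x) ≤ 1 / (1 + x)` and `∫₀^π dθ / (1 + c sin² θ) = π / √(1 + c)`; the lower bounds from
`exp (-x) ≥ 1 - x`, integrated over `[0, π]` or, when `c ≥ 1`, only over `|θ| ≤ 1 / √c`
(with `sin² θ ≤ θ²`).
-/

open Real

lemma norm2_sq (a : ℝ × ℝ) : norm2 a ^ 2 = a.1 ^ 2 + a.2 ^ 2 :=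
  sq_sqrt (by positivity)

lemma dot2_sub_left (a b c : ℝ × ℝ) : dot2 (a - b) c = dot2 a c - dot2 b c := by
  simp only [dot2, Prod.fst_sub, Prod.snd_sub]
  ring

lemma norm2_smul_uvec_add_smul_uperp_sub_sq (θ s t : ℝ) (w : ℝ × ℝ) :
    norm2 (s • uvec θ + t • uperp θ - w) ^ 2
      = (s - dot2 w (uvec θ)) ^ 2 + (t - dot2 w (uperp θ)) ^ 2 := by
  rw [norm2_sq]
  simp only [uvec, uperp, dot2, Prod.smul_mk, smul_eq_mul, Prod.mk_add_mk, Prod.fst_sub,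
    Prod.snd_sub]
  linear_combination (s ^ 2 + t ^ 2 - w.1 ^ 2 - w.2 ^ 2) * sin_sq_add_cos_sq θ

lemma exists_dot2_uperp_eq_norm2_mul_sin (w : ℝ × ℝ) :
    ∃ φ : ℝ, ∀ θ, dot2 w (uperp θ) = norm2 w * sin (θ - φ) := by
  set z : ℂ := ⟨w.1, w.2⟩
  have hz : ‖z‖ = norm2 w := by
    rw [Complex.norm_def, Complex.normSq_mk, norm2]
    ring_nf
  refine ⟨z.arg, fun θ => ?_⟩
  have hre : ‖z‖ * cos z.arg = w.1 := Complex.norm_mul_cos_arg z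
  have him : ‖z‖ * sin z.arg = w.2 := Complex.norm_mul_sin_arg z
  rw [dot2, uperp, sin_sub, ← hz]
  linear_combination (-sin θ) * hre + cos θ * him

lemma integral_comp_dot2_uperp_sq (f : ℝ → ℝ) (w : ℝ × ℝ) :
    ∫ θ in (0 : ℝ)..π, f (dot2 w (uperp θ) ^ 2)
      = ∫ θ in (0 : ℝ)..π, f (norm2 w ^ 2 * sin θ ^ 2) := by
  obtain ⟨φ, hφ⟩ := exists_dot2_uperp_eq_norm2_mul_sin w
  set g : ℝ → ℝ := fun θ => f (norm2 w ^ 2 * sin θ ^ 2)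
  have hper : Function.Periodic g π := fun θ => by simp only [g, sin_add_pi, neg_sq]
  calc ∫ θ in (0 : ℝ)..π, f (dot2 w (uperp θ) ^ 2)
      = ∫ θ in (0 : ℝ)..π, g (θ - φ) := by simp only [g, hφ, mul_pow]
    _ = ∫ θ in -φ..-φ + π, g θ := by rw [intervalIntegral.integral_comp_sub_right]; ring_nf
    _ = ∫ θ in (0 : ℝ)..π, g θ := by rw [hper.intervalIntegral_add_eq (-φ) 0, zero_add]

/-- For `b ≤ 0` both sides are junk zeros: the integrand is not integrable and `√` of a
non-positive number is `0`. -/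
lemma integral_exp_neg_sub_sq_div (b a : ℝ) :
    ∫ x : ℝ, exp (-(x - a) ^ 2 / b) = sqrt (π * b) := by
  have h := integral_sub_right_eq_self (μ := volume) (fun y : ℝ => exp (-b⁻¹ * y ^ 2)) a
  simp only [integral_gaussian, div_inv_eq_mul] at h
  rw [← h]
  congr with x
  ring_nf

/-- Completing the square in `t`. -/
lemma integral_exp_neg_sub_sq_mul_exp_neg_sub_sq {σ : ℝ} (hσ : 0 < σ) (p q : ℝ) :
    ∫ t : ℝ, exp (-(t - p) ^ 2 / (2 * σ)) * exp (-(t - q) ^ 2 / (2 * σ))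
      = sqrt (π * σ) * exp (-(p - q) ^ 2 / (4 * σ)) := by
  have hsq : ∀ t : ℝ, exp (-(t - p) ^ 2 / (2 * σ)) * exp (-(t - q) ^ 2 / (2 * σ))
      = exp (-(p - q) ^ 2 / (4 * σ)) * exp (-(t - (p + q) / 2) ^ 2 / σ) := fun t => by
    rw [← exp_add, ← exp_add]
    congr 1
    field_simp
    ring
  simp only [hsq, integral_const_mul, integral_exp_neg_sub_sq_div σ]
  ring

lemma lineProj_gauss_sub {r : ℝ} (hr : 0 < r) (w : ℝ × ℝ) (θ t : ℝ) :
    lineProj (fun y => gauss r (y - w)) θ t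
      = sqrt (sqrt π * r)⁻¹ * exp (-(t - dot2 w (uperp θ)) ^ 2 / (2 * r ^ 2)) := by
  have hsplit : ∀ s : ℝ, gauss r (s • uvec θ + t • uperp θ - w)
      = sqrt (2 * r * sqrt π) / (2 * π * r ^ 2)
        * exp (-(t - dot2 w (uperp θ)) ^ 2 / (2 * r ^ 2))
        * exp (-(s - dot2 w (uvec θ)) ^ 2 / (2 * r ^ 2)) := fun s => by
    rw [gauss, norm2_smul_uvec_add_smul_uperp_sub_sq, mul_assoc _ (exp _) (exp _), ← exp_add]
    congr 2
    ring
  have hconst : sqrt (2 * r * sqrt π) / (2 * π * r ^ 2) * sqrt (π * (2 * r ^ 2))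
      = sqrt (sqrt π * r)⁻¹ := by
    rw [eq_comm, sqrt_eq_iff_eq_sq (by positivity) (by positivity), mul_pow, div_pow,
      sq_sqrt (by positivity), sq_sqrt (by positivity)]
    field_simp
    exact (sq_sqrt pi_pos.le).symm
  simp only [lineProj, hsplit, integral_const_mul,
    integral_exp_neg_sub_sq_div (2 * r ^ 2), ← hconst]
  ring

lemma integral_lineProj_gauss_sub_mul {r : ℝ} (hr : 0 < r) (wi wj : ℝ × ℝ) (θ : ℝ) :
    ∫ t : ℝ, lineProj (fun y => gauss r (y - wi)) θ t * lineProj (fun y => gauss r (y - wj)) θ t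
      = exp (-(dot2 (wi - wj) (uperp θ) ^ 2 / (4 * r ^ 2))) := by
  have hK : sqrt (sqrt π * r)⁻¹ * sqrt (sqrt π * r)⁻¹ * sqrt (π * r ^ 2) = 1 := by
    rw [mul_self_sqrt (by positivity), sqrt_mul pi_pos.le, sqrt_sq hr.le]
    field_simp
  simp only [lineProj_gauss_sub hr, mul_mul_mul_comm _ (exp _), integral_const_mul,
    integral_exp_neg_sub_sq_mul_exp_neg_sub_sq (show 0 < r ^ 2 by positivity), dot2_sub_left]
  rw [← mul_assoc, hK, one_mul, neg_div]

lemma cos_sq_add_mul_sin_sq_pos {b : ℝ} (hb : 0 < b) (θ : ℝ) :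
    0 < cos θ ^ 2 + b * sin θ ^ 2 := by
  have hm : 0 < min 1 b := lt_min one_pos hb
  nlinarith [sin_sq_add_cos_sq θ,
    mul_le_mul_of_nonneg_right (min_le_left 1 b) (sq_nonneg (cos θ)),
    mul_le_mul_of_nonneg_right (min_le_right 1 b) (sq_nonneg (sin θ))]

/-- A primitive of `(cos² θ + a² sin² θ)⁻¹` on all of `ℝ`: it agrees with `arctan (a tan θ) / a`
on `(-π/2, π/2)` but has no jumps. -/
lemma hasDerivAt_primitive_inv_cos_sq_add_sq_mul_sin_sq {a : ℝ} (ha : 0 < a) (θ : ℝ) :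
    HasDerivAt (fun x => (x + arctan ((a - 1) * sin x * cos x / (cos x ^ 2 + a * sin x ^ 2))) / a)
      (cos θ ^ 2 + a ^ 2 * sin θ ^ 2)⁻¹ θ := by
  have hpyth := sin_sq_add_cos_sq θ
  have hD := cos_sq_add_mul_sin_sq_pos ha θ
  have hE := cos_sq_add_mul_sin_sq_pos (pow_pos ha 2) θ
  have hsq : 1 + ((a - 1) * sin θ * cos θ / (cos θ ^ 2 + a * sin θ ^ 2)) ^ 2
      = (cos θ ^ 2 + a ^ 2 * sin θ ^ 2) / (cos θ ^ 2 + a * sin θ ^ 2) ^ 2 := by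
    field_simp
    linear_combination (cos θ ^ 2 + a ^ 2 * sin θ ^ 2) * hpyth
  have hnum := ((hasDerivAt_sin θ).const_mul (a - 1)).fun_mul (hasDerivAt_cos θ)
  have hden := ((hasDerivAt_cos θ).fun_pow 2).fun_add (((hasDerivAt_sin θ).fun_pow 2).const_mul a)
  refine (((hasDerivAt_id' θ).fun_add ((hnum.fun_div hden hD.ne').arctan)).div_const a
    ).congr_deriv ?_
  rw [hsq]
  norm_num
  field_simp
  linear_combination ((a - 1) * cos θ ^ 2 - a * (a - 1) * sin θ ^ 2 + a) * hpyth

lemma continuous_inv_cos_sq_add_mul_sin_sq {b : ℝ} (hb : 0 < b) :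
    Continuous fun θ => (cos θ ^ 2 + b * sin θ ^ 2)⁻¹ :=
  (by fun_prop : Continuous fun θ => cos θ ^ 2 + b * sin θ ^ 2).inv₀
    fun θ => (cos_sq_add_mul_sin_sq_pos hb θ).ne'

lemma integral_inv_cos_sq_add_mul_sin_sq {b : ℝ} (hb : 0 < b) :
    ∫ θ in (0 : ℝ)..π, (cos θ ^ 2 + b * sin θ ^ 2)⁻¹ = π / sqrt b := by
  have hcont := (continuous_inv_cos_sq_add_mul_sin_sq hb).intervalIntegrable (μ := volume) 0 π
  rw [← sq_sqrt hb.le] at hcont ⊢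
  rw [intervalIntegral.integral_eq_sub_of_hasDerivAt
    (fun θ _ => hasDerivAt_primitive_inv_cos_sq_add_sq_mul_sin_sq (sqrt_pos.mpr hb) θ) hcont]
  simp

lemma integral_exp_neg_mul_sin_sq_le {c : ℝ} (hc : -1 < c) :
    ∫ θ in (0 : ℝ)..π, exp (-(c * sin θ ^ 2)) ≤ π / sqrt (1 + c) := by
  have hb : 0 < 1 + c := by linarith
  rw [← integral_inv_cos_sq_add_mul_sin_sq hb]
  refine intervalIntegral.integral_mono_on pi_pos.le
    (Continuous.intervalIntegrable (by fun_prop) _ _)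
    ((continuous_inv_cos_sq_add_mul_sin_sq hb).intervalIntegrable _ _) fun θ _ => ?_
  have hpos := cos_sq_add_mul_sin_sq_pos hb θ
  have hsum : cos θ ^ 2 + (1 + c) * sin θ ^ 2 = 1 + c * sin θ ^ 2 := by
    linear_combination sin_sq_add_cos_sq θ
  rw [exp_neg]
  refine inv_anti₀ hpos ?_
  linarith [add_one_le_exp (c * sin θ ^ 2)]

lemma mul_one_sub_half_le_integral_exp_neg_mul_sin_sq (c : ℝ) :
    π * (1 - c / 2) ≤ ∫ θ in (0 : ℝ)..π, exp (-(c * sin θ ^ 2)) := by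
  calc π * (1 - c / 2) = ∫ θ in (0 : ℝ)..π, (1 - c * sin θ ^ 2) := by
        rw [intervalIntegral.integral_sub (Continuous.intervalIntegrable (by fun_prop) _ _)
          (Continuous.intervalIntegrable (by fun_prop) _ _), intervalIntegral.integral_const_mul,
          integral_sin_sq]
        simp
        ring
    _ ≤ ∫ θ in (0 : ℝ)..π, exp (-(c * sin θ ^ 2)) :=
        intervalIntegral.integral_mono_on pi_pos.le
          (Continuous.intervalIntegrable (by fun_prop) _ _)
          (Continuous.intervalIntegrable (by fun_prop) _ _)
          fun θ _ => by linarith [add_one_le_exp (-(c * sin θ ^ 2))]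

lemma div_le_integral_exp_neg_mul_sin_sq {c : ℝ} (hc : 1 ≤ c) :
    4 / (3 * sqrt c) ≤ ∫ θ in (0 : ℝ)..π, exp (-(c * sin θ ^ 2)) := by
  set g : ℝ → ℝ := fun θ => exp (-(c * sin θ ^ 2))
  obtain ⟨u, hu_def⟩ : ∃ u, u = (sqrt c)⁻¹ := ⟨_, rfl⟩
  have hu : 0 < u := by rw [hu_def]; positivity
  have hcu : c * u ^ 2 = 1 := by
    rw [hu_def, inv_pow, sq_sqrt (by linarith), mul_inv_cancel₀ (by positivity)]
  have hu_le : u ≤ π / 2 := by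
    have : u ≤ 1 := hu_def ▸ inv_le_one_of_one_le₀ (one_le_sqrt.mpr hc)
    linarith [pi_gt_three]
  have hper : Function.Periodic g π := fun θ => by simp only [g, sin_add_pi, neg_sq]
  calc 4 / (3 * sqrt c) = ∫ θ in -u..u, (1 - c * θ ^ 2) := by
        rw [show 4 / (3 * sqrt c) = 4 / 3 * u by rw [hu_def]; ring,
          intervalIntegral.integral_sub (Continuous.intervalIntegrable (by fun_prop) _ _)
          (Continuous.intervalIntegrable (by fun_prop) _ _), intervalIntegral.integral_const,
          intervalIntegral.integral_const_mul, integral_pow]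
        norm_num
        linear_combination (2 / 3 * u) * hcu
    _ ≤ ∫ θ in -u..u, g θ :=
        intervalIntegral.integral_mono_on (by linarith)
          (Continuous.intervalIntegrable (by fun_prop) _ _)
          (Continuous.intervalIntegrable (by fun_prop) _ _) fun θ _ => by
          nlinarith [add_one_le_exp (-(c * sin θ ^ 2)), sin_sq_le_sq (x := θ)]
    _ ≤ ∫ θ in -(π / 2)..-(π / 2) + π, g θ :=
        intervalIntegral.integral_mono_interval (by linarith) (by linarith) (by linarith)
          (Filter.Eventually.of_forall fun θ => (exp_pos _).le)
          (Continuous.intervalIntegrable (by fun_prop) _ _)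
    _ = ∫ θ in (0 : ℝ)..π, g θ := by rw [hper.intervalIntegral_add_eq _ 0, zero_add]

lemma integral_integral_lineProj_gauss_sub_mul {r : ℝ} (hr : 0 < r) (wi wj : ℝ × ℝ) :
    ∫ θ in (0 : ℝ)..π, ∫ t : ℝ,
        lineProj (fun y => gauss r (y - wi)) θ t * lineProj (fun y => gauss r (y - wj)) θ t
      = ∫ θ in (0 : ℝ)..π, exp (-(norm2 (wi - wj) ^ 2 / (4 * r ^ 2) * sin θ ^ 2)) := by
  simp only [integral_lineProj_gauss_sub_mul hr,
    integral_comp_dot2_uperp_sq (fun x => exp (-(x / (4 * r ^ 2))))]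
  congr 1 with θ
  ring_nf

/-- two-sided bound on the angle-averaged correlation of line projections of
two translated Gaussians. -/
theorem coherence_line_projected_gaussians
    (r : ℝ) (hr : 0 < r) (wi wj : ℝ × ℝ) (d : ℝ) (hd : d = norm2 (wi - wj)) :
    (if d ≤ 2 * r then 1 - d ^ 2 / (8 * r ^ 2) else r / (2 * d))
      ≤ (1 / Real.pi) * ∫ θ in (0 : ℝ)..Real.pi, ∫ t : ℝ,
          lineProj (fun y => gauss r (y - wi)) θ t * lineProj (fun y => gauss r (y - wj)) θ t
    ∧ (1 / Real.pi) * (∫ θ in (0 : ℝ)..Real.pi, ∫ t : ℝ,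
          lineProj (fun y => gauss r (y - wi)) θ t * lineProj (fun y => gauss r (y - wj)) θ t)
      ≤ 1 / Real.sqrt (1 + d ^ 2 / (4 * r ^ 2)) := by
  set c := d ^ 2 / (4 * r ^ 2) with hc
  have hc0 : 0 ≤ c := by positivity
  rw [integral_integral_lineProj_gauss_sub_mul hr, ← hd]
  refine ⟨?_, ?_⟩
  · split_ifs with h
    · calc 1 - d ^ 2 / (8 * r ^ 2) = 1 / π * (π * (1 - c / 2)) := by rw [hc]; field_simp; ring
        _ ≤ _ := by gcongr; exact mul_one_sub_half_le_integral_exp_neg_mul_sin_sq c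
    · have hd2r : 2 * r < d := not_le.mp h
      have hd0 : 0 < d := by linarith
      have hsqrt : sqrt c = d / (2 * r) := by
        rw [hc, show d ^ 2 / (4 * r ^ 2) = (d / (2 * r)) ^ 2 by ring, sqrt_sq (by positivity)]
      have hc1 : 1 ≤ c := by
        rw [← one_le_sqrt, hsqrt, one_le_div (by positivity)]
        exact hd2r.le
      calc r / (2 * d) ≤ 1 / π * (4 / (3 * sqrt c)) := by
            rw [hsqrt, div_le_iff₀ (by positivity)]
            field_simp
            linarith [pi_lt_four]
        _ ≤ _ := by gcongr; exact div_le_integral_exp_neg_mul_sin_sq hc1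
  · calc 1 / π * ∫ θ in (0 : ℝ)..π, exp (-(c * sin θ ^ 2))
          ≤ 1 / π * (π / sqrt (1 + c)) := by
            gcongr; exact integral_exp_neg_mul_sin_sq_le (by linarith)
      _ = 1 / sqrt (1 + c) := by field_simp
end
end
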